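/- arXiv:1101.3797 — 3 statements merged into one kernel-verified Lean document; each statement's English description precedes it below -/
import Mathlib

section
/- Let Z be a k-dimensional irreducible projective subvariety of P^n over the complex numbers, with ideal sheaf I_Z. Then for every t ≥ 1, the codimension of H^0(P^n, I_Z(t)) in H^0(P^n, O(t)) is at least binomial(t+k, k). -/
/-!
Along a chain of primes `𝔭₀ < ⋯ < 𝔭ₖ₊₁` of `ℂ[x]/P`, an element of `𝔭ᵢ₊₁ \ 𝔭ᵢ` is transcendental
modulo `𝔭ᵢ` over any family that is algebraically independent modulo `𝔭ᵢ₊₁`, so `dim ℂ[x]/P = k + 1`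
yields `k + 1` algebraically independent elements of `ℂ[x]/P`. Since `ℂ[x]/P` is a domain generated
by the coordinates, a transcendence basis can be chosen among them: some `k + 1` coordinates
`x_{c₀}, …, x_{cₖ}` stay algebraically independent modulo `P`. Then `ℂ[y₀, …, yₖ] → ℂ[x]/P`,
`yⱼ ↦ x_{cⱼ}`, is injective and sends forms of degree `t` to images of forms of degree `t`, and the
former span a space of dimension `binom (t + k) k`.
-/

open MvPolynomial

universe u v

theorem AlgebraicIndependent.option_elim_mk_of_mem_of_notMem {K B ι : Type*} [CommRing K]
    [CommRing B] [Algebra K B] {I J : Ideal B} [I.IsPrime] (hIJ : I ≤ J) {b : B}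
    (hbJ : b ∈ J) (hbI : b ∉ I) {v : ι → B}
    (hv : AlgebraicIndependent K (Ideal.Quotient.mk J ∘ v)) :
    AlgebraicIndependent K (fun o : Option ι => Ideal.Quotient.mk I (o.elim b v)) := by
  set π := Ideal.Quotient.factorₐ K hIJ
  have hvI : AlgebraicIndependent K (Ideal.Quotient.mk I ∘ v) := hv.of_comp π
  have hπ : ∀ a : Algebra.adjoin K (Set.range (Ideal.Quotient.mk I ∘ v)), π a = 0 → a = 0 := by
    intro a ha
    obtain ⟨p, rfl⟩ := hvI.aevalEquiv.surjective a
    rw [AlgebraicIndependent.aevalEquiv_apply_coe, ← AlgHom.comp_apply, comp_aeval] at ha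
    rw [hv.eq_zero_of_aeval_eq_zero p ha, map_zero]
  have hfam : (fun o : Option ι => Ideal.Quotient.mk I (o.elim b v)) =
      fun o => o.elim (Ideal.Quotient.mk I b) (Ideal.Quotient.mk I ∘ v) := by
    funext o; cases o <;> rfl
  rw [hfam, hvI.option_iff_transcendental]
  intro halg
  have hb0 : Ideal.Quotient.mk I b ≠ 0 := by rwa [Ne, Ideal.Quotient.eq_zero_iff_mem]
  obtain ⟨q, hq0, hq⟩ := halg.exists_nonzero_coeff_and_aeval_eq_zero
    (mem_nonZeroDivisors_of_ne_zero hb0)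
  refine hq0 (hπ _ ?_)
  -- `π` kills `b`, so applying it to `q(b) = b · (q.divX)(b) + q₀ = 0` leaves `π q₀ = 0`.
  have hπb : π (Ideal.Quotient.mk I b) = 0 := Ideal.Quotient.eq_zero_iff_mem.mpr hbJ
  rw [← Polynomial.X_mul_divX_add q, map_add, map_mul, Polynomial.aeval_X, Polynomial.aeval_C]
    at hq
  simpa [hπb] using congrArg π hq

theorem exists_algebraicIndependent_mk_head {K B : Type*} [Field K] [CommRing B] [Algebra K B]
    (q : LTSeries (PrimeSpectrum B)) :
    ∃ v : Fin q.length → B, AlgebraicIndependent K (Ideal.Quotient.mk q.head.asIdeal ∘ v) := by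
  induction q using RelSeries.inductionOn with
  | singleton 𝔭 =>
    exact ⟨Fin.elim0, algebraicIndependent_empty_type_iff (ι := Fin 0) |>.mpr
      (algebraMap K (B ⧸ 𝔭.asIdeal)).injective⟩
  | cons q 𝔭 hlt ih =>
    obtain ⟨v, hv⟩ := ih
    obtain ⟨b, hbJ, hbI⟩ := SetLike.exists_of_lt ((PrimeSpectrum.asIdeal_lt_asIdeal _ _).mpr hlt)
    have hcons := hv.option_elim_mk_of_mem_of_notMem (K := K) hlt.le hbJ hbI
    rw [RelSeries.cons_length, RelSeries.head_cons]
    refine ⟨Fin.cons b v, ?_⟩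
    convert hcons.comp _ (finSuccEquiv q.length).injective using 1
    funext i
    refine Fin.cases ?_ (fun j => ?_) i <;> simp

theorem exists_algebraicIndependent_of_le_ringKrullDim {K B : Type*} [Field K] [CommRing B]
    [Algebra K B] {n : ℕ} (hn : n ≤ ringKrullDim B) :
    ∃ v : Fin n → B, AlgebraicIndependent K v := by
  obtain ⟨q, rfl⟩ := Order.le_krullDim_iff.mp hn
  obtain ⟨v, hv⟩ := exists_algebraicIndependent_mk_head (K := K) q
  exact ⟨v, hv.of_comp (Ideal.Quotient.mkₐ K _)⟩

theorem AlgebraicIndependent.exists_comp_of_adjoin_range_eq_top {K σ : Type*} {B : Type u}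
    {ι : Type v} [Field K] [CommRing B] [IsDomain B] [Algebra K B] {x : σ → B}
    (hx : Algebra.adjoin K (Set.range x) = ⊤) {v : ι → B} (hv : AlgebraicIndependent K v) :
    ∃ c : ι → σ, AlgebraicIndependent K (x ∘ c) := by
  have : Algebra.IsAlgebraic (Algebra.adjoin K (Set.range x)) B :=
    ⟨fun b => isAlgebraic_algebraMap (⟨b, hx ▸ Algebra.mem_top⟩ : Algebra.adjoin K (Set.range x))⟩
  obtain ⟨t, hts, ht⟩ := exists_isTranscendenceBasis_subset (R := K) (Set.range x)
  have hle : Cardinal.lift.{u} (Cardinal.mk ι) ≤ Cardinal.lift.{v} (Cardinal.mk t) := by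
    rw [ht.cardinalMk_eq_trdeg]
    exact hv.lift_cardinalMk_le_trdeg
  obtain ⟨e⟩ := Cardinal.lift_mk_le'.mp hle
  choose c hc using fun i => hts (e i).2
  refine ⟨c, ?_⟩
  convert ht.1.comp e e.injective using 1
  funext i
  exact hc i

theorem MvPolynomial.adjoin_range_mk_X_eq_top {σ K : Type*} [CommRing K]
    (P : Ideal (MvPolynomial σ K)) :
    Algebra.adjoin K (Set.range fun i => Ideal.Quotient.mk P (X i)) = ⊤ := by
  rw [show (Set.range fun i => Ideal.Quotient.mk P (X i)) =
      Ideal.Quotient.mkₐ K P '' Set.range X by rw [← Set.range_comp]; rfl,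
    ← AlgHom.map_adjoin, adjoin_range_X, Algebra.map_top, AlgHom.range_eq_top]
  exact Ideal.Quotient.mkₐ_surjective K P

theorem MvPolynomial.finrank_homogeneousSubmodule (σ K : Type*) [Fintype σ] [Field K] (t : ℕ) :
    Module.finrank K (homogeneousSubmodule σ K t) = (Fintype.card σ + t - 1).choose t := by
  classical
  have hs : {d : σ →₀ ℕ | d.degree = t} =
      ↑(Finset.univ.finsuppAntidiag t : Finset (σ →₀ ℕ)) := by
    ext d
    simp [Finset.mem_finsuppAntidiag, Finsupp.degree_eq_sum]
  rw [homogeneousSubmodule_eq_finsupp_supported,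
    (AddMonoidAlgebra.supportedEquivFinsupp _).finrank_eq, hs, Module.finrank_finsupp_self]
  simp [Finset.card_finsuppAntidiag_nat_eq_choose]

theorem MvPolynomial.finrank_homogeneousSubmodule_le_finrank_map {K σ ι : Type*} [Field K]
    [Finite σ] {P : Ideal (MvPolynomial σ K)} {c : ι → σ}
    (hc : AlgebraicIndependent K (fun i => Ideal.Quotient.mk P (X (c i)))) (t : ℕ) :
    Module.finrank K (homogeneousSubmodule ι K t) ≤
      Module.finrank K ((homogeneousSubmodule σ K t).map (Ideal.Quotient.mkₐ K P).toLinearMap) := by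
  set f := ((Ideal.Quotient.mkₐ K P).comp (rename c)).toLinearMap
  have hf : Function.Injective f := by
    have h : (Ideal.Quotient.mkₐ K P).comp (rename c) =
        aeval fun i => Ideal.Quotient.mk P (X (c i)) := algHom_ext fun i => by simp
    change Function.Injective ((Ideal.Quotient.mkₐ K P).comp (rename c))
    rw [h]
    exact hc
  have hle : (homogeneousSubmodule ι K t).map f ≤
      (homogeneousSubmodule σ K t).map (Ideal.Quotient.mkₐ K P).toLinearMap := by
    rintro _ ⟨p, hp, rfl⟩
    exact ⟨rename c p, hp.rename_isHomogeneous, rfl⟩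
  have : Module.Finite K ((homogeneousSubmodule σ K t).map (Ideal.Quotient.mkₐ K P).toLinearMap) :=
    Module.Finite.iff_fg.mpr ((homogeneousSubmodule_fg σ K t).map _)
  rw [(Submodule.equivMapOfInjective f hf _).finrank_eq]
  exact Submodule.finrank_mono hle

theorem statement0_general (n k t : ℕ)
    (P : Ideal (MvPolynomial (Fin (n + 1)) ℂ))
    (hprime : P.IsPrime)
    (hdim : ringKrullDim (MvPolynomial (Fin (n + 1)) ℂ ⧸ P) = ((k + 1 : ℕ) : WithBot ℕ∞)) :
    (t + k).choose k ≤
      Module.finrank ℂ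
        ((MvPolynomial.homogeneousSubmodule (Fin (n + 1)) ℂ t).map
          (Ideal.Quotient.mkₐ ℂ P).toLinearMap) := by
  have : IsDomain (MvPolynomial (Fin (n + 1)) ℂ ⧸ P) :=
    (Ideal.Quotient.isDomain_iff_prime P).mpr hprime
  obtain ⟨v, hv⟩ := exists_algebraicIndependent_of_le_ringKrullDim (K := ℂ) hdim.ge
  obtain ⟨c, hc⟩ := hv.exists_comp_of_adjoin_range_eq_top (adjoin_range_mk_X_eq_top P)
  have hdeg := finrank_homogeneousSubmodule_le_finrank_map hc t
  rwa [finrank_homogeneousSubmodule, Fintype.card_fin, show k + 1 + t - 1 = t + k by omega,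
    Nat.choose_symm_add] at hdeg

theorem statement0 (n k t : ℕ) (ht : 1 ≤ t)
    (P : Ideal (MvPolynomial (Fin (n + 1)) ℂ))
    (hprime : P.IsPrime)
    (hhom : ∀ f ∈ P, ∀ i : ℕ, MvPolynomial.homogeneousComponent i f ∈ P)
    (hdim : ringKrullDim (MvPolynomial (Fin (n + 1)) ℂ ⧸ P) = ((k + 1 : ℕ) : WithBot ℕ∞)) :
    (t + k).choose k ≤
      Module.finrank ℂ
        ((MvPolynomial.homogeneousSubmodule (Fin (n + 1)) ℂ t).map
          (Ideal.Quotient.mkₐ ℂ P).toLinearMap) :=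
  statement0_general n k t P hprime hdim
end

section
/- Let C be an irreducible projective curve in P^n whose linear span has dimension s. Then for every t ≥ 1, the codimension of the space of degree-t forms vanishing on C inside H^0(P^n, O(t)) is at least s·t + 1; equivalently, the image of the restriction map H^0(P^n, O(t)) → H^0(C, O_C(t)) has dimension at least s·t + 1. -/
/-!
Let `W` be the image of the linear forms in the domain `ℂ[x₀, …, xₙ] ⧸ P`; it has dimension
`(n + 1) - (n - s) = s + 1`, and `W ^ t` lies in the image of the degree-`t` forms. Hopf's
inequality `dim A + dim B ≤ dim (A * B) + 1`, valid for nonzero finite-dimensional subspaces of a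
domain over an algebraically closed field, then gives `dim (W ^ t) ≥ t * s + 1`.

Hopf's inequality is proved in the fraction field by induction on `dim A`. If some `x • B`
meets `A` in a proper nonzero subspace, the pair `(A ⊓ x • B, B ⊔ x⁻¹ • A)` has the same total
dimension, a smaller first member and a product contained in `A * B`. Otherwise, for `a ≠ 0` in
`A`, every `a⁻¹ * a'` with `a' ∈ A` stabilizes `B`, so it is integral over `k`, hence a scalar,
and `dim A ≤ 1`.
-/

open Module Submodule
open scoped Pointwise

namespace Submodule

theorem finrank_map_add_finrank_inf_ker {K V W : Type*} [Field K] [AddCommGroup V]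
    [Module K V] [AddCommGroup W] [Module K W] (f : V →ₗ[K] W) (p : Submodule K V)
    [FiniteDimensional K p] :
    finrank K ↥(p.map f) + finrank K ↥(p ⊓ LinearMap.ker f) = finrank K p := by
  rw [← (f.domRestrict p).finrank_range_add_finrank_ker, LinearMap.range_domRestrict,
    LinearMap.ker_domRestrict, ← finrank_map_subtype_eq, map_comap_subtype]

section Algebra

variable {k R : Type*} [Field k] [CommRing R] [Algebra k R]

instance finiteDimensional_mul (A B : Submodule k R) [FiniteDimensional k A]
    [FiniteDimensional k B] : FiniteDimensional k ↥(A * B) :=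
  (fg_iff_finiteDimensional _).1 <|
    (fg_iff_finiteDimensional A).2 ‹_› |>.mul <| (fg_iff_finiteDimensional B).2 ‹_›

instance finiteDimensional_pow (A : Submodule k R) [FiniteDimensional k A] (t : ℕ) :
    FiniteDimensional k ↥(A ^ t) :=
  (fg_iff_finiteDimensional _).1 <| ((fg_iff_finiteDimensional A).2 ‹_›).pow t

end Algebra

section Field

variable {k F : Type*} [Field k] [Field F] [Algebra k F]

theorem finrank_pointwise_smul {x : F} (hx : x ≠ 0) (B : Submodule k F) :
    finrank k ↥(x • B) = finrank k B :=
  congrArg Cardinal.toNat (rank_map_eq (mul_right_injective₀ hx) B)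

instance finiteDimensional_pointwise_smul (x : F) (B : Submodule k F) [FiniteDimensional k B] :
    FiniteDimensional k ↥(x • B) :=
  inferInstanceAs (FiniteDimensional k ↥(B.map (DistribSMul.toLinearMap k F x)))

theorem finrank_inf_smul_add_finrank_sup_inv_smul {x : F} (hx : x ≠ 0) (A B : Submodule k F)
    [FiniteDimensional k A] [FiniteDimensional k B] :
    finrank k ↥(A ⊓ x • B) + finrank k ↥(B ⊔ x⁻¹ • A) = finrank k A + finrank k B := by
  have hT : x • (B ⊔ x⁻¹ • A) = x • B ⊔ A := by rw [smul_sup', smul_inv_smul₀ hx]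
  rw [← finrank_pointwise_smul hx (B ⊔ x⁻¹ • A), hT, ← finrank_pointwise_smul hx B, add_comm,
    sup_comm, finrank_sup_add_finrank_inf_eq]

theorem inf_smul_mul_sup_inv_smul_le {x : F} (hx : x ≠ 0) (A B : Submodule k F) :
    (A ⊓ x • B) * (B ⊔ x⁻¹ • A) ≤ A * B := by
  rw [mul_sup]
  refine sup_le (mul_le_mul_left inf_le_left B) ?_
  calc (A ⊓ x • B) * (x⁻¹ • A) ≤ x • B * x⁻¹ • A := mul_le_mul_left inf_le_right _
    _ = (span k {x} * span k {x⁻¹}) * (B * A) := by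
      rw [← span_singleton_mul, ← span_singleton_mul, mul_mul_mul_comm]
    _ = A * B := by
      rw [span_mul_span, Set.singleton_mul_singleton, mul_inv_cancel₀ hx, ← one_eq_span,
        one_mul, Submodule.mul_comm]

theorem finrank_le_finrank_mul_of_mem {A : Submodule k F} {a : F} (ha : a ∈ A) (ha0 : a ≠ 0)
    (B : Submodule k F) [FiniteDimensional k ↥(A * B)] :
    finrank k B ≤ finrank k ↥(A * B) := by
  rw [← finrank_pointwise_smul ha0 B, ← span_singleton_mul]
  exact finrank_mono (mul_le_mul_left ((span_singleton_le_iff_mem a A).2 ha) B)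

variable [IsAlgClosed k]

theorem mem_range_algebraMap_of_mul_mem {B : Submodule k F} [FiniteDimensional k B] (hB : B ≠ ⊥)
    {y : F} (hy : ∀ b ∈ B, y * b ∈ B) : y ∈ (algebraMap k F).range :=
  have hint : IsIntegral k y :=
    isIntegral_of_smul_mem_submodule B hB (fg_iff_finiteDimensional B |>.2 ‹_›) y hy
  minpoly.mem_range_of_degree_eq_one k y
    (IsAlgClosed.degree_eq_one_of_irreducible k (minpoly.irreducible hint))

theorem finrank_le_one_of_forall_le_smul {A B : Submodule k F} [FiniteDimensional k B]
    (hB : B ≠ ⊥) (h : ∀ x : F, x ≠ 0 → A ⊓ x • B ≠ ⊥ → A ≤ x • B) : finrank k A ≤ 1 := by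
  rcases eq_or_ne A ⊥ with rfl | hA
  · simp
  obtain ⟨a, haA, ha0⟩ := exists_mem_ne_zero_of_ne_bot hA
  suffices hle : A ≤ k ∙ a from (finrank_mono hle).trans (finrank_span_singleton ha0).le
  intro a' ha'
  have hstab : ∀ b ∈ B, a⁻¹ * a' * b ∈ B := by
    intro b hb
    rcases eq_or_ne b 0 with rfl | hb0
    · simp
    have hx : a * b⁻¹ ≠ 0 := mul_ne_zero ha0 (inv_ne_zero hb0)
    have ha : a ∈ A ⊓ (a * b⁻¹) • B :=
      ⟨haA, (mem_smul_iff_inv_mul_mem hx).2 (by simpa [hb0, ha0] using hb)⟩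
    have := (mem_smul_iff_inv_mul_mem hx).1 (h _ hx ((Submodule.ne_bot_iff _).2 ⟨a, ha, ha0⟩) ha')
    convert this using 1
    field_simp
  obtain ⟨c, hc⟩ := mem_range_algebraMap_of_mul_mem hB hstab
  exact mem_span_singleton.2 ⟨c, by rw [Algebra.smul_def, hc]; field_simp⟩

theorem finrank_add_finrank_le_finrank_mul_add_one (A B : Submodule k F)
    [FiniteDimensional k A] [FiniteDimensional k B] (hA : A ≠ ⊥) (hB : B ≠ ⊥) :
    finrank k A + finrank k B ≤ finrank k ↥(A * B) + 1 := by
  induction hd : finrank k A using Nat.strong_induction_on generalizing A B with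
  | _ d ih =>
  obtain ⟨a, haA, ha0⟩ := exists_mem_ne_zero_of_ne_bot hA
  by_cases hx : ∃ x : F, x ≠ 0 ∧ A ⊓ x • B ≠ ⊥ ∧ ¬ A ≤ x • B
  · obtain ⟨x, hx0, hS, hSA⟩ := hx
    have hlt : finrank k ↥(A ⊓ x • B) < d :=
      hd ▸ finrank_lt_finrank_of_lt (inf_lt_left.2 hSA)
    have hT : B ⊔ x⁻¹ • A ≠ ⊥ := ne_bot_of_le_ne_bot hB le_sup_left
    have := ih _ hlt _ _ hS hT rfl
    have := finrank_mono (inf_smul_mul_sup_inv_smul_le hx0 A B)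
    have := finrank_inf_smul_add_finrank_sup_inv_smul hx0 A B
    omega
  · push Not at hx
    have := finrank_le_one_of_forall_le_smul hB hx
    have := finrank_le_finrank_mul_of_mem haA ha0 B
    omega

end Field

section Domain

variable {k R : Type*} [Field k] [IsAlgClosed k] [CommRing R] [IsDomain R] [Algebra k R]

theorem finrank_add_finrank_le_finrank_mul_add_one_of_isDomain (A B : Submodule k R)
    [FiniteDimensional k A] [FiniteDimensional k B] (hA : A ≠ ⊥) (hB : B ≠ ⊥) :
    finrank k A + finrank k B ≤ finrank k ↥(A * B) + 1 := by
  let ι := IsScalarTower.toAlgHom k R (FractionRing R)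
  have hι : Function.Injective ι.toLinearMap := IsFractionRing.injective R (FractionRing R)
  have hfinrank (C : Submodule k R) : finrank k ↥(C.map ι.toLinearMap) = finrank k C :=
    (equivMapOfInjective _ hι C).finrank_eq.symm
  have hne {C : Submodule k R} (hC : C ≠ ⊥) : C.map ι.toLinearMap ≠ ⊥ := by
    simpa using (map_injective_of_injective hι).ne hC
  have := finrank_add_finrank_le_finrank_mul_add_one _ _ (hne hA) (hne hB)
  rwa [← Submodule.map_mul, hfinrank, hfinrank, hfinrank] at this

theorem le_finrank_pow (A : Submodule k R) [FiniteDimensional k A] (hA : A ≠ ⊥) (t : ℕ) :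
    t * (finrank k A - 1) + 1 ≤ finrank k ↥(A ^ t) := by
  induction t with
  | zero => simp [one_eq_span]
  | succ t ih =>
    have hpos : 0 < finrank k A := finrank_pos_iff.2 (nontrivial_iff_ne_bot.2 hA)
    have hAt : A ^ t ≠ ⊥ := fun h => by rw [h, finrank_bot] at ih; omega
    have := finrank_add_finrank_le_finrank_mul_add_one_of_isDomain _ _ hAt hA
    rw [pow_succ, add_mul, one_mul]
    omega

end Domain

end Submodule

namespace MvPolynomial

variable {σ K : Type*} [Field K]

instance finiteDimensional_homogeneousSubmodule [Finite σ] (t : ℕ) :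
    FiniteDimensional K ↥(homogeneousSubmodule σ K t) :=
  (fg_iff_finiteDimensional _).1 (homogeneousSubmodule_fg σ K t)

theorem finrank_homogeneousSubmodule_one [Fintype σ] :
    finrank K ↥(homogeneousSubmodule σ K 1) = Fintype.card σ := by
  rw [homogeneousSubmodule_one_eq_span_X, finrank_span_eq_card (linearIndependent_X σ K)]

theorem homogeneousSubmodule_one_pow_le (t : ℕ) :
    homogeneousSubmodule σ K 1 ^ t ≤ homogeneousSubmodule σ K t := by
  induction t with
  | zero => exact one_le.2 (isHomogeneous_one σ K)
  | succ t ih =>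
    rw [pow_succ]
    exact (mul_le_mul' ih le_rfl).trans (homogeneousSubmodule_mul t 1)

end MvPolynomial

open MvPolynomial

theorem statement1_general (n s t : ℕ) (hs : s ≤ n)
    (P : Ideal (MvPolynomial (Fin (n + 1)) ℂ))
    (hprime : P.IsPrime)
    (hspan : Module.finrank ℂ
        ↥((MvPolynomial.homogeneousSubmodule (Fin (n + 1)) ℂ 1) ⊓
          (Submodule.restrictScalars ℂ P)) = n - s) :
    s * t + 1 ≤
      Module.finrank ℂ
        ((MvPolynomial.homogeneousSubmodule (Fin (n + 1)) ℂ t).map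
          (Ideal.Quotient.mkₐ ℂ P).toLinearMap) := by
  set q := (Ideal.Quotient.mkₐ ℂ P).toLinearMap
  have hker : LinearMap.ker q = P.restrictScalars ℂ := by
    ext f
    simp [q, Ideal.Quotient.eq_zero_iff_mem]
  have hW : s + 1 ≤ finrank ℂ ↥((homogeneousSubmodule (Fin (n + 1)) ℂ 1).map q) := by
    have := finrank_map_add_finrank_inf_ker q (homogeneousSubmodule (Fin (n + 1)) ℂ 1)
    rw [hker, hspan, finrank_homogeneousSubmodule_one, Fintype.card_fin] at this
    omega
  set W := (homogeneousSubmodule (Fin (n + 1)) ℂ 1).map q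
  have hWt : W ^ t ≤ (homogeneousSubmodule (Fin (n + 1)) ℂ t).map q := by
    rw [← Submodule.map_pow]
    exact map_mono (homogeneousSubmodule_one_pow_le t)
  have hW0 : W ≠ ⊥ := fun h => by rw [h, finrank_bot] at hW; omega
  have := hprime
  calc s * t + 1 ≤ t * (finrank ℂ W - 1) + 1 := by rw [mul_comm]; gcongr; omega
    _ ≤ finrank ℂ ↥(W ^ t) := le_finrank_pow W hW0 t
    _ ≤ _ := finrank_mono hWt

theorem statement1 (n s t : ℕ) (ht : 1 ≤ t) (hs : s ≤ n)
    (P : Ideal (MvPolynomial (Fin (n + 1)) ℂ))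
    (hprime : P.IsPrime)
    (hhom : ∀ f ∈ P, ∀ i : ℕ, MvPolynomial.homogeneousComponent i f ∈ P)
    (hcurve : ringKrullDim (MvPolynomial (Fin (n + 1)) ℂ ⧸ P) = ((2 : ℕ) : WithBot ℕ∞))
    (hspan : Module.finrank ℂ
        ↥((MvPolynomial.homogeneousSubmodule (Fin (n + 1)) ℂ 1) ⊓
          (Submodule.restrictScalars ℂ P)) = n - s) :
    s * t + 1 ≤
      Module.finrank ℂ
        ((MvPolynomial.homogeneousSubmodule (Fin (n + 1)) ℂ t).map
          (Ideal.Quotient.mkₐ ℂ P).toLinearMap) :=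
  statement1_general n s t hs P hprime hspan
end

section
/- Let C ⊂ P^n be a smooth conic through p spanning a 2-plane P, Γ a hyperplane not through p given by x_0 = 0, l_C = Γ ∩ P, q_C = Γ ∩ T_pC. If f is a homogeneous form of degree i on Γ such that f restricted to l_C has a zero of order j at q_C, then the section x_0^{d−i} f of O_{P^n}(d) restricts to a section of O_C(d) with a zero of order exactly i + j at p. -/
/-!
Write the conic as `u ↦ A (1, u, u²) = A e₀ + u • (A e₁ + u • A e₂)` with `A e₀ = c • e₀`.
Away from the coordinate `x₀` its point at `u` is `u • (A e₁ + u • A e₂)`, while the point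
`qC + u • rC` of `l_C` is `-c • (A e₁ + u • A e₂)`. As `f` is homogeneous of degree `i` and does
not involve `x₀`, its restrictions to `C` and to `l_C` are therefore `uⁱ g(u)` and `(-c)ⁱ g(u)` for
one and the same polynomial `g`, so `g` vanishes to order `j` at `0`. Finally `x₀` restricts on
`C` to a polynomial with value `c ≠ 0` at `u = 0`, so the order of `x₀^{d-i} f` at `p` is `i + j`.
-/

noncomputable section
open MvPolynomial

/-- Parameter for a parametrized conic in `ℙⁿ(ℂ)`: the matrix entries of a
linear map `ℂ³ → ℂ^{n+1}`; the conic is the image of the standard (Veronese)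
conic `(s:t) ↦ (s², st, t²)` in `ℙ²` under this map.  Every smooth conic arises
this way from an injective such map, and the marked point is the image of
`(1:0)`. -/
abbrev CParam (n : ℕ) := (Fin (n + 1) × Fin 3) → ℂ

/-- The linear map `ℂ³ → ℂ^{n+1}` attached to a conic parameter. -/
def cmap (n : ℕ) (v : CParam n) : (Fin 3 → ℂ) →ₗ[ℂ] (Fin (n + 1) → ℂ) :=
  (Matrix.of fun i j => v (i, j)).mulVecLin

/-- The standard parametrization of the conic. -/
def ver (s t : ℂ) : Fin 3 → ℂ := ![s ^ 2, s * t, t ^ 2]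

/-- `v` parametrizes a smooth conic iff the linear map is injective (the
plane of the conic is then the image of `ℂ³`). -/
def IsSmoothConicParam (n : ℕ) (v : CParam n) : Prop := Function.Injective (cmap n v)

/-- The set of points of `ℙⁿ(ℂ)` on the conic. -/
def conicPts (n : ℕ) (v : CParam n) : Set (Projectivization ℂ (Fin (n + 1) → ℂ)) :=
  {x | ∃ s t : ℂ, ∃ hw : cmap n v (ver s t) ≠ 0, x = Projectivization.mk ℂ _ hw}

/-- The `j`-th column, i.e. the image of the `j`-th basis vector of `ℂ³`. -/
def ccol (n : ℕ) (j : Fin 3) (v : CParam n) : Fin (n + 1) → ℂ := fun i => v (i, j)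

/-- The conic passes through the point `[vp]` at the marked parameter `(1:0)`. -/
def MarkedAt (n : ℕ) (vp : Fin (n + 1) → ℂ) (v : CParam n) : Prop :=
  ∃ c : ℂ, c ≠ 0 ∧ ccol n 0 v = c • vp

/-- The (affine cone over the) tangent line to the conic at the marked point. -/
def tangentSpan (n : ℕ) (v : CParam n) : Submodule ℂ (Fin (n + 1) → ℂ) :=
  Submodule.span ℂ {ccol n 0 v, ccol n 1 v}

/-- The (affine cone over the) 2-plane spanned by the conic. -/
def planeSpan (n : ℕ) (v : CParam n) : Submodule ℂ (Fin (n + 1) → ℂ) :=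
  LinearMap.range (cmap n v)

/-- A Zariski-closed subset of the affine space `ℂ^κ`. -/
def IsZarClosed {κ : Type} (S : Set (κ → ℂ)) : Prop :=
  ∃ I : Ideal (MvPolynomial κ ℂ), S = MvPolynomial.zeroLocus ℂ I

/-- A cone in `ℂ^κ` (so that it corresponds to a closed subvariety of the
projective space of `ℂ^κ`; closed cones give *complete* families). -/
def IsCone {κ : Type} (S : Set (κ → ℂ)) : Prop := ∀ (c : ℂ), ∀ x ∈ S, c • x ∈ S

/-- The Krull dimension of (the Zariski closure of) a subset of `ℂ^κ`. -/
def zarDim {κ : Type} (S : Set (κ → ℂ)) : WithBot ℕ∞ :=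
  ringKrullDim (MvPolynomial κ ℂ ⧸ MvPolynomial.vanishingIdeal ℂ S)


/-- Representative of `q_C = Γ ∩ T_pC` (for `Γ = {x₀ = 0}`): the point of the
tangent line `Span(A e₀, A e₁)` with vanishing `x₀`-coordinate. -/
def qC (n : ℕ) (v : CParam n) : Fin (n + 1) → ℂ :=
  (ccol n 1 v 0) • ccol n 0 v - (ccol n 0 v 0) • ccol n 1 v

/-- Representative of a second point of `l_C = Γ ∩ Span(C)`, so that
`u ↦ qC + u • rC` parametrizes `l_C` with `q_C` at `u = 0`. -/
def rC (n : ℕ) (v : CParam n) : Fin (n + 1) → ℂ :=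
  (ccol n 2 v 0) • ccol n 0 v - (ccol n 0 v 0) • ccol n 2 v

/-- Restriction of a form `f` to the line `l_C`, in the affine coordinate `u`
of the parametrization `u ↦ qC + u • rC` (so `q_C` is at `u = 0`). -/
def restrictLine (n : ℕ) (v : CParam n) (f : MvPolynomial (Fin (n + 1)) ℂ) :
    Polynomial ℂ :=
  MvPolynomial.eval₂ Polynomial.C
    (fun idx => Polynomial.C (qC n v idx) + Polynomial.C (rC n v idx) * Polynomial.X) f

/-- Restriction of a form `f` to the conic, in the affine coordinate `u` of
the parametrization `u ↦ A(ver(1,u)) = A(1, u, u²)` (the marked point `p` is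
at `u = 0`). -/
def restrictConic (n : ℕ) (v : CParam n) (f : MvPolynomial (Fin (n + 1)) ℂ) :
    Polynomial ℂ :=
  MvPolynomial.eval₂ Polynomial.C
    (fun idx => Polynomial.C (v (idx, 0)) + Polynomial.C (v (idx, 1)) * Polynomial.X +
      Polynomial.C (v (idx, 2)) * Polynomial.X ^ 2) f

namespace MvPolynomial

theorem IsHomogeneous.eval₂_const_mul {σ R S : Type*} [CommSemiring R] [CommSemiring S]
    {f : MvPolynomial σ R} {m : ℕ} (hf : f.IsHomogeneous m) (g : R →+* S) (φ : σ → S) (a : S) :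
    f.eval₂ g (fun k => a * φ k) = a ^ m * f.eval₂ g φ := by
  rw [eval₂_eq, eval₂_eq, Finset.mul_sum]
  refine Finset.sum_congr rfl fun mo hmo => ?_
  have hdeg : ∑ k ∈ mo.support, mo k = m := by
    simpa [Finsupp.weight_apply, Finsupp.sum] using hf (mem_support_iff.mp hmo)
  simp only [mul_pow, Finset.prod_mul_distrib, Finset.prod_pow_eq_pow_sum, hdeg]
  ring

theorem IsHomogeneous.eval₂_eq_pow_mul {σ R S : Type*} [CommSemiring R] [CommSemiring S]
    {f : MvPolynomial σ R} {m : ℕ} (hf : f.IsHomogeneous m) (g : R →+* S) {φ ψ : σ → S}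
    {a : S} {k₀ : σ} (hk₀ : ∀ mo ∈ f.support, mo k₀ = 0) (hφ : ∀ k ≠ k₀, φ k = a * ψ k) :
    f.eval₂ g φ = a ^ m * f.eval₂ g ψ := by
  rw [← hf.eval₂_const_mul]
  refine eval₂_congr _ _ _ fun {k} {mo} hk hmo => hφ k ?_
  rintro rfl
  exact Finsupp.mem_support_iff.mp hk (hk₀ mo (mem_support_iff.mpr hmo))

end MvPolynomial

namespace Polynomial

theorem rootMultiplicity_mul_of_not_isRoot {R : Type*} [CommRing R] [IsDomain R] {p q : R[X]}
    {a : R} (hp : ¬p.IsRoot a) (hq : q ≠ 0) :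
    (p * q).rootMultiplicity a = q.rootMultiplicity a := by
  have hp0 : p ≠ 0 := by rintro rfl; exact hp eval_zero
  rw [rootMultiplicity_mul (mul_ne_zero hp0 hq), rootMultiplicity_eq_zero hp, zero_add]

end Polynomial

/-- Restriction of `f` to the line `u ↦ A e₁ + u • A e₂`, the tangent to the conic at `u = ∞`. -/
def restrictTangentAtInfty (n : ℕ) (v : CParam n) (f : MvPolynomial (Fin (n + 1)) ℂ) :
    Polynomial ℂ :=
  f.eval₂ Polynomial.C fun k => Polynomial.C (v (k, 1)) + Polynomial.C (v (k, 2)) * Polynomial.X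

section MarkedAtOrigin

variable {n i : ℕ} {v : CParam n} {f : MvPolynomial (Fin (n + 1)) ℂ}

theorem restrictConic_eq_X_pow_mul (hp : ∀ k ≠ 0, v (k, 0) = 0) (hf : f.IsHomogeneous i)
    (hfΓ : ∀ mo ∈ f.support, mo 0 = 0) :
    restrictConic n v f = Polynomial.X ^ i * restrictTangentAtInfty n v f :=
  hf.eval₂_eq_pow_mul _ hfΓ fun k hk => by rw [hp k hk]; simp only [map_zero]; ring

theorem restrictLine_eq_C_mul (hp : ∀ k ≠ 0, v (k, 0) = 0) (hf : f.IsHomogeneous i)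
    (hfΓ : ∀ mo ∈ f.support, mo 0 = 0) :
    restrictLine n v f = Polynomial.C ((-v (0, 0)) ^ i) * restrictTangentAtInfty n v f := by
  rw [map_pow]
  refine hf.eval₂_eq_pow_mul _ hfΓ fun k hk => ?_
  simp only [qC, rC, ccol, Pi.sub_apply, Pi.smul_apply, smul_eq_mul, hp k hk]
  simp only [map_sub, map_mul, map_neg, map_zero]
  ring

end MarkedAtOrigin

theorem restrictConic_X_eval_zero (n : ℕ) (v : CParam n) (k : Fin (n + 1)) :
    (restrictConic n v (MvPolynomial.X k)).eval 0 = v (k, 0) := by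
  simp [restrictConic]

theorem statement7_general (n d i j : ℕ)
    (v : CParam n)
    -- the marked point of the conic is `p = (1:0:⋯:0)`
    (hmark : ∃ c : ℂ, c ≠ 0 ∧ ccol n 0 v = c • (fun k : Fin (n + 1) => if k = 0 then (1 : ℂ) else 0))
    (f : MvPolynomial (Fin (n + 1)) ℂ)
    (hf : f ∈ MvPolynomial.homogeneousSubmodule (Fin (n + 1)) ℂ i)
    -- `f` is a form on `Γ = {x₀ = 0}`: no monomial involves `x₀`
    (hfΓ : ∀ mo ∈ f.support, mo 0 = 0)
    -- `f` restricted to `l_C` has a zero of order (exactly) `j` at `q_C`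
    (hordj : restrictLine n v f ≠ 0 ∧ (restrictLine n v f).rootMultiplicity 0 = j) :
    restrictConic n v ((MvPolynomial.X 0 : MvPolynomial (Fin (n + 1)) ℂ) ^ (d - i) * f) ≠ 0 ∧
      (restrictConic n v ((MvPolynomial.X 0 : MvPolynomial (Fin (n + 1)) ℂ) ^ (d - i) * f)).rootMultiplicity 0
        = i + j := by
  obtain ⟨c, hc, hcol⟩ := hmark
  obtain ⟨hline0, hj⟩ := hordj
  have hcol0 (k : Fin (n + 1)) : v (k, 0) = if k = 0 then c else 0 := by
    simpa [ccol] using congrFun hcol k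
  have hp (k : Fin (n + 1)) (hk : k ≠ 0) : v (k, 0) = 0 := by rw [hcol0, if_neg hk]
  have hfi : f.IsHomogeneous i := (mem_homogeneousSubmodule _ _).mp hf
  set g := restrictTangentAtInfty n v f
  have hline := restrictLine_eq_C_mul hp hfi hfΓ
  have hg0 : g ≠ 0 := right_ne_zero_of_mul (hline ▸ hline0)
  have hgj : g.rootMultiplicity 0 = j := by
    rw [← hj, hline, Polynomial.rootMultiplicity_mul_of_not_isRoot (by simp [hcol0, hc]) hg0]
  have hx0 : ¬((restrictConic n v (X 0)) ^ (d - i)).IsRoot 0 := by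
    simp [restrictConic_X_eval_zero, hcol0, hc]
  have hXg : Polynomial.X ^ i * g ≠ 0 := mul_ne_zero (pow_ne_zero _ Polynomial.X_ne_zero) hg0
  have hconic : restrictConic n v (X 0 ^ (d - i) * f) =
      restrictConic n v (X 0) ^ (d - i) * (Polynomial.X ^ i * g) := by
    rw [← restrictConic_eq_X_pow_mul hp hfi hfΓ, restrictConic, eval₂_mul, eval₂_pow]; rfl
  rw [hconic, Polynomial.rootMultiplicity_mul_of_not_isRoot hx0 hXg,
    Polynomial.rootMultiplicity_mul hXg, hgj]
  refine ⟨mul_ne_zero (by rintro h; simp [h] at hx0) hXg, ?_⟩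
  simpa using Polynomial.rootMultiplicity_X_sub_C_pow (0 : ℂ) i

theorem statement7 (n d i j : ℕ) (hn : 2 ≤ n) (hd : 2 ≤ d)
    (hji : j ≤ i) (hi : 1 ≤ i) (hid : i ≤ d)
    (v : CParam n) (hv : IsSmoothConicParam n v)
    -- the marked point of the conic is `p = (1:0:⋯:0)`
    (hmark : ∃ c : ℂ, c ≠ 0 ∧ ccol n 0 v = c • (fun k : Fin (n + 1) => if k = 0 then (1 : ℂ) else 0))
    (f : MvPolynomial (Fin (n + 1)) ℂ)
    (hf : f ∈ MvPolynomial.homogeneousSubmodule (Fin (n + 1)) ℂ i)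
    -- `f` is a form on `Γ = {x₀ = 0}`: no monomial involves `x₀`
    (hfΓ : ∀ mo ∈ f.support, mo 0 = 0)
    -- `f` restricted to `l_C` has a zero of order (exactly) `j` at `q_C`
    (hordj : restrictLine n v f ≠ 0 ∧ (restrictLine n v f).rootMultiplicity 0 = j) :
    restrictConic n v ((MvPolynomial.X 0 : MvPolynomial (Fin (n + 1)) ℂ) ^ (d - i) * f) ≠ 0 ∧
      (restrictConic n v ((MvPolynomial.X 0 : MvPolynomial (Fin (n + 1)) ℂ) ^ (d - i) * f)).rootMultiplicity 0
        = i + j :=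
  statement7_general n d i j v hmark f hf hfΓ hordj

end
end
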